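/- For every natural number γ, every syntax tree t on G_γ can be rewritten by a finite sequence of one-step →_γ-rewritings into a hook syntax tree, and this hook syntax tree is hook_γ(word_γ(t)). -/

import Mathlib

/-- Syntax trees on `G_γ = {⊣_a, ⊢_a : a ∈ {1, …, γ}}`: complete planar binary
trees whose internal nodes carry a label `⊣_a` (`dashv a`) or `⊢_a` (`vdash a`),
the index `a : Fin γ` encoding the letter `a + 1 ∈ {1, …, γ}`. -/
inductive STree (γ : ℕ) : Type
  | leaf : STree γ
  | dashv (a : Fin γ) (l r : STree γ) : STree γ
  | vdash (a : Fin γ) (l r : STree γ) : STree γ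

/-- `hA a` replaces every letter smaller than `a` by `a`. -/
def hA (a : ℕ) (w : List ℕ) : List ℕ := w.map (fun b => max a b)

/-- The word associated with a syntax tree. -/
def wordOf {γ : ℕ} : STree γ → List ℕ
  | .leaf => [0]
  | .dashv a l r => wordOf l ++ hA (a.val + 1) (wordOf r)
  | .vdash a l r => hA (a.val + 1) (wordOf l) ++ wordOf r

/-- Number of leaves (the arity) of a syntax tree. -/
def nleaves {γ : ℕ} : STree γ → ℕ
  | .leaf => 1
  | .dashv _ l r => nleaves l + nleaves r
  | .vdash _ l r => nleaves l + nleaves r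

/-- The right comb with internal nodes labeled, from top to bottom, by
`⊢_{u_1}, …, ⊢_{u_{|u|}}`, each left child being a leaf. -/
def rightComb {γ : ℕ} : List (Fin γ) → STree γ
  | [] => .leaf
  | a :: u => .vdash a .leaf (rightComb u)

/-- The hook syntax tree associated with the word `u0v`: a left comb labeled
from bottom to top by `⊣_{v_1}, …, ⊣_{v_{|v|}}` (right children being leaves)
grafted on top of the right comb associated to `u`. -/
def hook {γ : ℕ} (u v : List (Fin γ)) : STree γ :=
  v.foldl (fun t b => .dashv b t .leaf) (rightComb u)

/-- Root patterns of the rewrite rule `→_γ`. -/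
inductive RootRW (γ : ℕ) : STree γ → STree γ → Prop
  | r1 (a a' : Fin γ) (x y z : STree γ) :
      RootRW γ (.vdash a' x (.dashv a y z)) (.dashv a (.vdash a' x y) z)
  | r2 (a b : Fin γ) (h : a < b) (x y z : STree γ) :
      RootRW γ (.dashv a x (.vdash b y z)) (.dashv a (.dashv b x y) z)
  | r3 (a b : Fin γ) (h : a < b) (x y z : STree γ) :
      RootRW γ (.vdash a (.dashv b x y) z) (.vdash a x (.vdash b y z))
  | r4 (a b : Fin γ) (h : a < b) (x y z : STree γ) :
      RootRW γ (.dashv a x (.dashv b y z)) (.dashv b (.dashv a x y) z)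
  | r5 (a b : Fin γ) (h : a < b) (x y z : STree γ) :
      RootRW γ (.vdash a (.vdash b x y) z) (.vdash b x (.vdash a y z))
  | r6 (c d : Fin γ) (h : c ≤ d) (x y z : STree γ) :
      RootRW γ (.dashv d x (.dashv c y z)) (.dashv d (.dashv d x y) z)
  | r7 (c d : Fin γ) (h : c ≤ d) (x y z : STree γ) :
      RootRW γ (.dashv d x (.vdash c y z)) (.dashv d (.dashv d x y) z)
  | r8 (c d : Fin γ) (h : c ≤ d) (x y z : STree γ) :
      RootRW γ (.vdash d (.dashv c x y) z) (.vdash d x (.vdash d y z))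
  | r9 (c d : Fin γ) (h : c ≤ d) (x y z : STree γ) :
      RootRW γ (.vdash d (.vdash c x y) z) (.vdash d x (.vdash d y z))

/-- One-step rewriting by `→_γ`: a root pattern applied anywhere inside a tree. -/
inductive Step (γ : ℕ) : STree γ → STree γ → Prop
  | here {s t : STree γ} : RootRW γ s t → Step γ s t
  | dashvL (a : Fin γ) {s s' : STree γ} (r : STree γ) :
      Step γ s s' → Step γ (.dashv a s r) (.dashv a s' r)
  | dashvR (a : Fin γ) (l : STree γ) {s s' : STree γ} :
      Step γ s s' → Step γ (.dashv a l s) (.dashv a l s')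
  | vdashL (a : Fin γ) {s s' : STree γ} (r : STree γ) :
      Step γ s s' → Step γ (.vdash a s r) (.vdash a s' r)
  | vdashR (a : Fin γ) (l : STree γ) {s s' : STree γ} :
      Step γ s s' → Step γ (.vdash a l s) (.vdash a l s')


section Aux

variable {γ : ℕ}

lemma hA_append (a : ℕ) (x y : List ℕ) : hA a (x ++ y) = hA a x ++ hA a y := by
  simp [hA]

lemma hA_hA (a b : ℕ) (w : List ℕ) : hA a (hA b w) = hA (max a b) w := by
  simp [hA, List.map_map, Function.comp_def, max_assoc]

lemma word_rootRW {s t : STree γ} (h : RootRW γ s t) : wordOf t = wordOf s := by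
  cases h with
  | r1 a a' x y z => simp [wordOf, hA_append, List.append_assoc]
  | r2 a b h x y z =>
      have hv : max (a.val + 1) (b.val + 1) = b.val + 1 := by
        have := Fin.lt_def.mp h; omega
      simp [wordOf, hA_append, hA_hA, hv, List.append_assoc]
  | r3 a b h x y z =>
      have hv : max (a.val + 1) (b.val + 1) = b.val + 1 := by
        have := Fin.lt_def.mp h; omega
      simp [wordOf, hA_append, hA_hA, hv, List.append_assoc]
  | r4 a b h x y z =>
      have hv : max (a.val + 1) (b.val + 1) = b.val + 1 := by
        have := Fin.lt_def.mp h; omega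
      simp [wordOf, hA_append, hA_hA, hv, List.append_assoc]
  | r5 a b h x y z =>
      have hv : max (a.val + 1) (b.val + 1) = b.val + 1 := by
        have := Fin.lt_def.mp h; omega
      simp [wordOf, hA_append, hA_hA, hv, List.append_assoc]
  | r6 c d h x y z =>
      have hv : max (d.val + 1) (c.val + 1) = d.val + 1 := by
        have := Fin.le_def.mp h; omega
      simp [wordOf, hA_append, hA_hA, hv, List.append_assoc]
  | r7 c d h x y z =>
      have hv : max (d.val + 1) (c.val + 1) = d.val + 1 := by
        have := Fin.le_def.mp h; omega
      simp [wordOf, hA_append, hA_hA, hv, List.append_assoc]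
  | r8 c d h x y z =>
      have hv : max (d.val + 1) (c.val + 1) = d.val + 1 := by
        have := Fin.le_def.mp h; omega
      simp [wordOf, hA_append, hA_hA, hv, List.append_assoc]
  | r9 c d h x y z =>
      have hv : max (d.val + 1) (c.val + 1) = d.val + 1 := by
        have := Fin.le_def.mp h; omega
      simp [wordOf, hA_append, hA_hA, hv, List.append_assoc]

lemma word_step {s t : STree γ} (h : Step γ s t) : wordOf t = wordOf s := by
  induction h with
  | here h => exact word_rootRW h
  | dashvL a r _ ih => simp [wordOf, ih]
  | dashvR a l _ ih => simp [wordOf, ih]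
  | vdashL a r _ ih => simp [wordOf, ih]
  | vdashR a l _ ih => simp [wordOf, ih]

lemma word_rtg {s t : STree γ} (h : Relation.ReflTransGen (Step γ) s t) :
    wordOf t = wordOf s := by
  induction h with
  | refl => rfl
  | tail _ h ih => rw [word_step h, ih]

/-- Prepend a right comb on top of a tree. -/
def rcp (l : List (Fin γ)) (z : STree γ) : STree γ :=
  l.foldr (fun c t => .vdash c .leaf t) z

lemma rcp_nil (z : STree γ) : rcp [] z = z := rfl

lemma rcp_cons (c : Fin γ) (l : List (Fin γ)) (z : STree γ) :
    rcp (c :: l) z = .vdash c .leaf (rcp l z) := rfl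

lemma rcp_append (l₁ l₂ : List (Fin γ)) (z : STree γ) :
    rcp (l₁ ++ l₂) z = rcp l₁ (rcp l₂ z) := by
  simp [rcp, List.foldr_append]

lemma rcp_rightComb (l u : List (Fin γ)) :
    rcp l (rightComb u) = rightComb (l ++ u) := by
  induction l with
  | nil => rfl
  | cons c l ih => rw [rcp_cons, ih]; rfl

lemma hook_nil (u : List (Fin γ)) : hook u [] = rightComb u := rfl

lemma hook_snoc (u v : List (Fin γ)) (b : Fin γ) :
    hook u (v ++ [b]) = .dashv b (hook u v) .leaf := by
  simp [hook]

lemma rtg_dashvL (a : Fin γ) (r : STree γ) {s s' : STree γ}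
    (h : Relation.ReflTransGen (Step γ) s s') :
    Relation.ReflTransGen (Step γ) (.dashv a s r) (.dashv a s' r) :=
  Relation.ReflTransGen.lift (fun x => STree.dashv a x r)
    (fun _ _ hxy => Step.dashvL a r hxy) _ _ h

lemma rtg_dashvR (a : Fin γ) (l : STree γ) {s s' : STree γ}
    (h : Relation.ReflTransGen (Step γ) s s') :
    Relation.ReflTransGen (Step γ) (.dashv a l s) (.dashv a l s') :=
  Relation.ReflTransGen.lift (fun x => STree.dashv a l x)
    (fun _ _ hxy => Step.dashvR a l hxy) _ _ h

lemma rtg_vdashL (a : Fin γ) (r : STree γ) {s s' : STree γ}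
    (h : Relation.ReflTransGen (Step γ) s s') :
    Relation.ReflTransGen (Step γ) (.vdash a s r) (.vdash a s' r) :=
  Relation.ReflTransGen.lift (fun x => STree.vdash a x r)
    (fun _ _ hxy => Step.vdashL a r hxy) _ _ h

lemma rtg_vdashR (a : Fin γ) (l : STree γ) {s s' : STree γ}
    (h : Relation.ReflTransGen (Step γ) s s') :
    Relation.ReflTransGen (Step γ) (.vdash a l s) (.vdash a l s') :=
  Relation.ReflTransGen.lift (fun x => STree.vdash a l x)
    (fun _ _ hxy => Step.vdashR a l hxy) _ _ h

lemma stepsA0 (a : Fin γ) (u' : List (Fin γ)) :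
    ∀ (u v : List (Fin γ)),
    Relation.ReflTransGen (Step γ) (.dashv a (hook u v) (hook u' []))
      (hook u (v ++ u'.map (max a) ++ [a])) := by
  induction u' with
  | nil =>
      intro u v
      have h1 : (STree.dashv a (hook u v) (hook ([] : List (Fin γ)) []))
          = hook u (v ++ [a]) := (hook_snoc u v a).symm
      rw [h1]
      simpa using Relation.ReflTransGen.refl
  | cons c u'' ih =>
      intro u v
      rcases lt_or_ge a c with hac | hca
      · refine Relation.ReflTransGen.head
          (b := .dashv a (hook u (v ++ [c])) (hook u'' [])) ?_ ?_
        · rw [hook_snoc]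
          exact Step.here (RootRW.r2 a c hac _ _ _)
        · have := ih u (v ++ [c])
          simpa [max_eq_right hac.le, List.append_assoc] using this
      · refine Relation.ReflTransGen.head
          (b := .dashv a (hook u (v ++ [a])) (hook u'' [])) ?_ ?_
        · rw [hook_snoc]
          exact Step.here (RootRW.r7 c a hca _ _ _)
        · have := ih u (v ++ [a])
          simpa [max_eq_left hca, List.append_assoc] using this

lemma stepsA (a : Fin γ) (u' v' u v : List (Fin γ)) :
    Relation.ReflTransGen (Step γ) (.dashv a (hook u v) (hook u' v'))
      (hook u (v ++ u'.map (max a) ++ [a] ++ v'.map (max a))) := by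
  induction v' using List.reverseRecOn with
  | nil => simpa using stepsA0 a u' u v
  | append_singleton w' b ih =>
      rcases lt_or_ge a b with hab | hba
      · refine Relation.ReflTransGen.head
          (b := .dashv b (.dashv a (hook u v) (hook u' w')) .leaf) ?_ ?_
        · rw [hook_snoc]
          exact Step.here (RootRW.r4 a b hab _ _ _)
        · have h2 := rtg_dashvL b STree.leaf ih
          refine h2.trans ?_
          simp only [List.map_append, List.map_cons, List.map_nil,
            max_eq_right hab.le]
          rw [← List.append_assoc, hook_snoc]
      · refine Relation.ReflTransGen.head
          (b := .dashv a (.dashv a (hook u v) (hook u' w')) .leaf) ?_ ?_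
        · rw [hook_snoc]
          exact Step.here (RootRW.r6 b a hba _ _ _)
        · have h2 := rtg_dashvL a STree.leaf ih
          refine h2.trans ?_
          simp only [List.map_append, List.map_cons, List.map_nil,
            max_eq_left hba]
          rw [← List.append_assoc, hook_snoc]

lemma stepsB1a (a : Fin γ) (u : List (Fin γ)) :
    ∀ (z : STree γ),
    Relation.ReflTransGen (Step γ) (.vdash a (hook u []) z)
      (rcp (u.map (max a) ++ [a]) z) := by
  induction u with
  | nil => intro z; exact Relation.ReflTransGen.refl
  | cons c u'' ih =>
      intro z
      rcases lt_or_ge a c with hac | hca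
      · refine Relation.ReflTransGen.head
          (b := .vdash c .leaf (.vdash a (hook u'' []) z)) ?_ ?_
        · exact Step.here (RootRW.r5 a c hac _ _ _)
        · have h2 := rtg_vdashR c STree.leaf (ih z)
          refine h2.trans ?_
          simp only [List.map_cons, max_eq_right hac.le, List.cons_append,
            rcp_cons]
          exact Relation.ReflTransGen.refl
      · refine Relation.ReflTransGen.head
          (b := .vdash a .leaf (.vdash a (hook u'' []) z)) ?_ ?_
        · exact Step.here (RootRW.r9 c a hca _ _ _)
        · have h2 := rtg_vdashR a STree.leaf (ih z)
          refine h2.trans ?_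
          simp only [List.map_cons, max_eq_left hca, List.cons_append,
            rcp_cons]
          exact Relation.ReflTransGen.refl

lemma stepsB1 (a : Fin γ) (v : List (Fin γ)) :
    ∀ (u : List (Fin γ)) (z : STree γ),
    Relation.ReflTransGen (Step γ) (.vdash a (hook u v) z)
      (rcp (u.map (max a) ++ [a] ++ v.map (max a)) z) := by
  induction v using List.reverseRecOn with
  | nil => intro u z; simpa using stepsB1a a u z
  | append_singleton w b ih =>
      intro u z
      rcases lt_or_ge a b with hab | hba
      · refine Relation.ReflTransGen.head
          (b := .vdash a (hook u w) (.vdash b .leaf z)) ?_ ?_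
        · rw [hook_snoc]
          exact Step.here (RootRW.r3 a b hab _ _ _)
        · have := ih u (.vdash b .leaf z)
          refine this.trans ?_
          have : (STree.vdash b .leaf z) = rcp [b] z := rfl
          rw [this, ← rcp_append]
          simp only [List.map_append, List.map_cons, List.map_nil,
            max_eq_right hab.le, List.append_assoc]
          exact Relation.ReflTransGen.refl
      · refine Relation.ReflTransGen.head
          (b := .vdash a (hook u w) (.vdash a .leaf z)) ?_ ?_
        · rw [hook_snoc]
          exact Step.here (RootRW.r8 b a hba _ _ _)
        · have := ih u (.vdash a .leaf z)
          refine this.trans ?_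
          have : (STree.vdash a .leaf z) = rcp [a] z := rfl
          rw [this, ← rcp_append]
          simp only [List.map_append, List.map_cons, List.map_nil,
            max_eq_left hba, List.append_assoc]
          exact Relation.ReflTransGen.refl

lemma stepsB (a : Fin γ) (u' v' u v : List (Fin γ)) :
    Relation.ReflTransGen (Step γ) (.vdash a (hook u v) (hook u' v'))
      (hook (u.map (max a) ++ [a] ++ v.map (max a) ++ u') v') := by
  induction v' using List.reverseRecOn with
  | nil =>
      have := stepsB1 a v u (rightComb u')
      rw [rcp_rightComb] at this
      simpa [hook_nil, List.append_assoc] using this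
  | append_singleton w' b ih =>
      refine Relation.ReflTransGen.head
        (b := .dashv b (.vdash a (hook u v) (hook u' w')) .leaf) ?_ ?_
      · rw [hook_snoc]
        exact Step.here (RootRW.r1 b a _ _ _)
      · have h2 := rtg_dashvL b STree.leaf ih
        refine h2.trans ?_
        rw [hook_snoc]

end Aux

/-- Every syntax tree rewrites by a finite sequence of `→_γ`-rewritings into a
hook syntax tree, namely `hook_γ(word_γ(t))` (the unique hook syntax tree whose
associated word is `word_γ(t)`). -/
theorem stmt3 (γ : ℕ) (t : STree γ) :
    ∃ u v : List (Fin γ), Relation.ReflTransGen (Step γ) t (hook u v) ∧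
      wordOf (hook u v) = wordOf t := by
  induction t with
  | leaf => exact ⟨[], [], Relation.ReflTransGen.refl, rfl⟩
  | dashv a l r ihl ihr =>
      obtain ⟨u, v, hl, -⟩ := ihl
      obtain ⟨u', v', hr, -⟩ := ihr
      refine ⟨u, v ++ u'.map (max a) ++ [a] ++ v'.map (max a), ?_, ?_⟩
      · exact ((rtg_dashvL a r hl).trans (rtg_dashvR a _ hr)).trans
          (stepsA a u' v' u v)
      · exact word_rtg (((rtg_dashvL a r hl).trans (rtg_dashvR a _ hr)).trans
          (stepsA a u' v' u v))
  | vdash a l r ihl ihr =>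
      obtain ⟨u, v, hl, -⟩ := ihl
      obtain ⟨u', v', hr, -⟩ := ihr
      refine ⟨u.map (max a) ++ [a] ++ v.map (max a) ++ u', v', ?_, ?_⟩
      · exact ((rtg_vdashL a r hl).trans (rtg_vdashR a _ hr)).trans
          (stepsB a u' v' u v)
      · exact word_rtg (((rtg_vdashL a r hl).trans (rtg_vdashR a _ hr)).trans
          (stepsB a u' v' u v))
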